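/- Let I = (F, W, (C_f)_{f∈F}, (C_w)_{w∈W}) be a matching market instance in which every choice function is substitutable and consistent, and let μ, μ' be stable matchings of I. Then C_f(μ(f) ∪ μ'(f)) = μ(f) for all f ∈ F if and only if C_w(μ(w) ∪ μ'(w)) = μ'(w) for all w ∈ W. That is, μ ⪰ μ' in the firm order if and only if all workers weakly prefer μ'. -/
import Mathlib

open Finset

/-- A choice function is substitutable if `a ∈ C S` implies `a ∈ C (T ∪ {a})`
for every `T ⊆ S`. -/
def Substitutable {α : Type*} [DecidableEq α] (C : Finset α → Finset α) : Prop :=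
  ∀ (S T : Finset α) (a : α), T ⊆ S → a ∈ C S → a ∈ C (insert a T)

/-- A choice function is consistent if `C S ⊆ T ⊆ S` implies `C T = C S`. -/
def Consistent {α : Type*} (C : Finset α → Finset α) : Prop :=
  ∀ (S T : Finset α), C S ⊆ T → T ⊆ S → C T = C S

/-- The set of workers matched to firm `f` in the matching `μ`. -/
def matchedW {F W : Type*} [DecidableEq F] [DecidableEq W]
    (μ : Finset (F × W)) (f : F) : Finset W :=
  (μ.filter fun p => p.1 = f).image Prod.snd

/-- The set of firms matched to worker `w` in the matching `μ`. -/
def matchedF {F W : Type*} [DecidableEq F] [DecidableEq W]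
    (μ : Finset (F × W)) (w : W) : Finset F :=
  (μ.filter fun p => p.2 = w).image Prod.fst

/-- A matching is stable if it is individually rational and has no blocking pair. -/
def IsStable {F W : Type*} [DecidableEq F] [DecidableEq W]
    (Cf : F → Finset W → Finset W) (Cw : W → Finset F → Finset F)
    (μ : Finset (F × W)) : Prop :=
  (∀ f, Cf f (matchedW μ f) = matchedW μ f) ∧
  (∀ w, Cw w (matchedF μ w) = matchedF μ w) ∧
  (∀ f w, (f, w) ∉ μ →
    ¬ (f ∈ Cw w (insert f (matchedF μ w)) ∧ w ∈ Cf f (insert w (matchedW μ f))))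

/-- The firm (partial) order on matchings: `μ ⪰ μ'` iff
`C_f(μ(f) ∪ μ'(f)) = μ(f)` for every firm `f`. -/
def FirmGE {F W : Type*} [DecidableEq F] [DecidableEq W]
    (Cf : F → Finset W → Finset W) (μ μ' : Finset (F × W)) : Prop :=
  ∀ f, Cf f (matchedW μ f ∪ matchedW μ' f) = matchedW μ f

lemma mem_matchedW' {F W : Type*} [DecidableEq F] [DecidableEq W]
    (μ : Finset (F × W)) (f : F) (w : W) :
    w ∈ matchedW μ f ↔ (f, w) ∈ μ := by
  simp only [matchedW, mem_image, mem_filter]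
  constructor
  · rintro ⟨⟨a, b⟩, ⟨h, rfl⟩, rfl⟩; exact h
  · intro h; exact ⟨(f, w), ⟨h, rfl⟩, rfl⟩

lemma mem_matchedF' {F W : Type*} [DecidableEq F] [DecidableEq W]
    (μ : Finset (F × W)) (f : F) (w : W) :
    f ∈ matchedF μ w ↔ (f, w) ∈ μ := by
  simp only [matchedF, mem_image, mem_filter]
  constructor
  · rintro ⟨⟨a, b⟩, ⟨h, rfl⟩, rfl⟩; exact h
  · intro h; exact ⟨(f, w), ⟨h, rfl⟩, rfl⟩

/-- Main direction: firms all prefer `μ` ⇒ workers all prefer `μ'`. -/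
lemma oppose_forward {F W : Type*} [DecidableEq F] [DecidableEq W]
    (Cf : F → Finset W → Finset W) (Cw : W → Finset F → Finset F)
    (hwsub : ∀ w S, Cw w S ⊆ S)
    (hfs : ∀ f, Substitutable (Cf f)) (hws : ∀ w, Substitutable (Cw w))
    (hwc : ∀ w, Consistent (Cw w))
    (μ μ' : Finset (F × W)) (hμ' : IsStable Cf Cw μ')
    (h : ∀ f, Cf f (matchedW μ f ∪ matchedW μ' f) = matchedW μ f) :
    ∀ w, Cw w (matchedF μ w ∪ matchedF μ' w) = matchedF μ' w := by
  intro w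
  set A := Cw w (matchedF μ w ∪ matchedF μ' w) with hA
  have hsub : A ⊆ matchedF μ' w := by
    intro f hf
    by_contra hfn
    have hfu : f ∈ matchedF μ w ∪ matchedF μ' w := hwsub w _ hf
    have hfμ : (f, w) ∈ μ := by
      rcases mem_union.mp hfu with h1 | h1
      · exact (mem_matchedF' μ f w).mp h1
      · exact absurd h1 hfn
    have hnot : (f, w) ∉ μ' := fun hc => hfn ((mem_matchedF' μ' f w).mpr hc)
    refine hμ'.2.2 f w hnot ⟨?_, ?_⟩
    · exact hws w _ (matchedF μ' w) f subset_union_right hf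
    · have hwf : w ∈ Cf f (matchedW μ f ∪ matchedW μ' f) := by
        rw [h f]; exact (mem_matchedW' μ f w).mpr hfμ
      exact hfs f _ (matchedW μ' f) w subset_union_right hwf
  have := hwc w (matchedF μ w ∪ matchedF μ' w) (matchedF μ' w) hsub subset_union_right
  rw [hμ'.2.1 w] at this
  exact this.symm

lemma matchedW_swap {F W : Type*} [DecidableEq F] [DecidableEq W]
    (μ : Finset (F × W)) (w : W) :
    matchedW (μ.image Prod.swap) w = matchedF μ w := by
  ext f
  rw [mem_matchedW', mem_matchedF', mem_image]
  constructor
  · rintro ⟨⟨a, b⟩, hm, he⟩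
    obtain ⟨rfl, rfl⟩ : b = w ∧ a = f := by
      simpa [Prod.swap, Prod.ext_iff] using he
    exact hm
  · intro hm; exact ⟨(f, w), hm, rfl⟩

lemma matchedF_swap {F W : Type*} [DecidableEq F] [DecidableEq W]
    (μ : Finset (F × W)) (f : F) :
    matchedF (μ.image Prod.swap) f = matchedW μ f := by
  ext w
  rw [mem_matchedF', mem_matchedW', mem_image]
  constructor
  · rintro ⟨⟨a, b⟩, hm, he⟩
    obtain ⟨rfl, rfl⟩ : b = w ∧ a = f := by
      simpa [Prod.swap, Prod.ext_iff] using he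
    exact hm
  · intro hm; exact ⟨(f, w), hm, rfl⟩

lemma isStable_swap {F W : Type*} [DecidableEq F] [DecidableEq W]
    (Cf : F → Finset W → Finset W) (Cw : W → Finset F → Finset F)
    (μ : Finset (F × W)) (h : IsStable Cf Cw μ) :
    IsStable Cw Cf (μ.image Prod.swap) := by
  obtain ⟨h1, h2, h3⟩ := h
  refine ⟨fun w => by rw [matchedW_swap]; exact h2 w,
          fun f => by rw [matchedF_swap]; exact h1 f,
          fun w f hm hb => ?_⟩
  have hm' : (f, w) ∉ μ := fun hc => hm (mem_image.mpr ⟨(f, w), hc, rfl⟩)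
  rw [matchedF_swap, matchedW_swap] at hb
  exact h3 f w hm' ⟨hb.2, hb.1⟩

/-- **Opposition of interests.** For stable matchings `μ, μ'` of a matching market
with substitutable and consistent choice functions, all firms weakly prefer `μ`
iff all workers weakly prefer `μ'`. -/
theorem opposition_of_interests
    {F W : Type*} [Fintype F] [Fintype W] [DecidableEq F] [DecidableEq W]
    (Cf : F → Finset W → Finset W) (Cw : W → Finset F → Finset F)
    (hfsub : ∀ f S, Cf f S ⊆ S) (hwsub : ∀ w S, Cw w S ⊆ S)
    (hfs : ∀ f, Substitutable (Cf f)) (hfc : ∀ f, Consistent (Cf f))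
    (hws : ∀ w, Substitutable (Cw w)) (hwc : ∀ w, Consistent (Cw w))
    (μ μ' : Finset (F × W)) (hμ : IsStable Cf Cw μ) (hμ' : IsStable Cf Cw μ') :
    (∀ f, Cf f (matchedW μ f ∪ matchedW μ' f) = matchedW μ f) ↔
    (∀ w, Cw w (matchedF μ w ∪ matchedF μ' w) = matchedF μ' w) := by
  constructor
  · exact oppose_forward Cf Cw hwsub hfs hws hwc μ μ' hμ'
  · intro h f
    have hst : IsStable Cw Cf (μ.image Prod.swap) := isStable_swap Cf Cw μ hμ
    have := oppose_forward Cw Cf hfsub hws hfs hfc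
      (μ'.image Prod.swap) (μ.image Prod.swap) hst
      (fun w => by
        rw [matchedW_swap, matchedW_swap, union_comm]
        exact h w) f
    rw [matchedF_swap, matchedF_swap, union_comm] at this
    exact this
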